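/- arXiv:1210.8046 — 3 statements merged into one kernel-verified Lean document; each statement's English description precedes it below -/
import Mathlib

section
/- If (x,y) satisfies both x² + y² - (q/4)x - (7/4)y = 0 and (1-e²)x² + y² - (q/4)x - (7/4 - e²)y = 0 with (x,y) ≠ (0,0), then 4x³ - 3x - q = 0. -/
theorem stmt_1 (q e : ℝ) (he : 0 < e) (he1 : e ≠ 1) (x y : ℝ)
    (hne : (x, y) ≠ ((0 : ℝ), (0 : ℝ)))
    (hcirc : x ^ 2 + y ^ 2 - (q / 4) * x - (7 / 4) * y = 0)
    (hconic : (1 - e ^ 2) * x ^ 2 + y ^ 2 - (q / 4) * x - (7 / 4 - e ^ 2) * y = 0) :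
    4 * x ^ 3 - 3 * x - q = 0 := by
  have he2 : e ^ 2 ≠ 0 := pow_ne_zero 2 he.ne'
  have hy : y = x ^ 2 := by
    have h : e ^ 2 * (x ^ 2 - y) = 0 := by linarith
    rcases mul_eq_zero.1 h with h | h
    · exact absurd h he2
    · linarith
  have hx : x ≠ 0 := by
    intro h
    apply hne
    simp [hy, h]
  subst hy
  have h : x * (4 * x ^ 3 - 3 * x - q) = 0 := by ring_nf; ring_nf at hcirc; linarith
  rcases mul_eq_zero.1 h with h | h
  · exact absurd h hx
  · exact h
end

section
/- The smallest subfield of ℂ containing 0, 1, and i that is closed under complex conjugation, square roots, and cube roots equals the set of all z ∈ ℂ lying in some subfield of the form ℚ(α₁,...,αₙ) where for each i, αᵢ^{kᵢ} ∈ ℚ(α₁,...,α_{i-1}) with kᵢ ∈ {2,3}. -/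
/-!
Towers of square and cube roots can be concatenated, conjugated, and extended by one more root,
so the elements they generate form a subfield closed under conjugation, square roots and cube
roots. Conversely, a subfield `G` of `ℂ` with square and cube roots of its elements contains
*every* square or cube root of each of its elements: two square roots differ by a sign, and two
cube roots by a cube root of unity `ω`, which lies in `G` because `(ω - 1)((2ω + 1)² + 3) = 0`.
Induction along a tower then puts all of it inside `G`.
-/

/-- The property of being a subfield of ℂ containing `i` that is closed under
complex conjugation, square roots, and cube roots. -/
def IsConicClosed (F : Subfield ℂ) : Prop :=
  Complex.I ∈ F ∧
  (∀ z ∈ F, (starRingEnd ℂ) z ∈ F) ∧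
  (∀ z ∈ F, ∃ w ∈ F, w ^ 2 = z) ∧
  (∀ z ∈ F, ∃ w ∈ F, w ^ 3 = z)

namespace Subfield

variable {K : Type*} [Field K] {G : Subfield K}

theorem mem_of_sq_mem (hsq : ∀ z ∈ G, ∃ w ∈ G, w ^ 2 = z) {w : K} (hw : w ^ 2 ∈ G) :
    w ∈ G := by
  obtain ⟨w', hw'G, hw'⟩ := hsq _ hw
  rcases sq_eq_sq_iff_eq_or_eq_neg.mp hw'.symm with rfl | rfl
  exacts [hw'G, G.neg_mem hw'G]

theorem mem_of_cube_mem [NeZero (2 : K)] (hsq : ∀ z ∈ G, ∃ w ∈ G, w ^ 2 = z)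
    (hcube : ∀ z ∈ G, ∃ w ∈ G, w ^ 3 = z) {w : K} (hw : w ^ 3 ∈ G) : w ∈ G := by
  obtain ⟨w', hw'G, hw'⟩ := hcube _ hw
  rcases eq_or_ne w' 0 with rfl | hw'0
  · rw [eq_comm, zero_pow three_ne_zero, pow_eq_zero_iff three_ne_zero] at hw'
    exact hw' ▸ G.zero_mem
  set ω := w / w'
  have hω : ω ^ 3 = 1 := by rw [div_pow, ← hw', div_self (pow_ne_zero 3 hw'0)]
  have hωG : ω ∈ G := by
    have : (ω - 1) * ((2 * ω + 1) ^ 2 - (-3)) = 0 := by linear_combination 4 * hω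
    rcases mul_eq_zero.mp this with h | h
    · rw [sub_eq_zero.mp h]; exact G.one_mem
    · have h2ω : 2 * ω + 1 ∈ G :=
        mem_of_sq_mem hsq (sub_eq_zero.mp h ▸ G.neg_mem (ofNat_mem G 3))
      have : ω = (2 * ω + 1 - 1) / 2 := by field_simp; ring
      rw [this]
      exact G.div_mem (G.sub_mem h2ω G.one_mem) (ofNat_mem G 2)
  simpa [ω, div_mul_cancel₀ w hw'0] using G.mul_mem hωG hw'G

end Subfield

section RadicalTower

variable {K : Type*} [Field K] {S : Set ℕ} {n m : ℕ} {α : Fin n → K} {k : Fin n → ℕ}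
  {β : Fin m → K} {l : Fin m → ℕ}

variable (S) in
def IsRadicalTower (α : Fin n → K) (k : Fin n → ℕ) : Prop :=
  (∀ i, k i ∈ S) ∧ ∀ i, α i ^ k i ∈ Subfield.closure (α '' {j | j < i})

theorem IsRadicalTower.append (hα : IsRadicalTower S α k) (hlS : ∀ i, l i ∈ S)
    (hβ : ∀ i, β i ^ l i ∈ Subfield.closure (Set.range α ∪ β '' {j | j < i})) :
    IsRadicalTower S (Fin.append α β) (Fin.append k l) := by
  refine ⟨Fin.addCases (by simpa using hα.1) (by simpa using hlS), Fin.addCases ?_ ?_⟩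
  · intro i
    simp only [Fin.append_left]
    refine Subfield.closure_mono ?_ (hα.2 i)
    rintro _ ⟨j, hj, rfl⟩
    exact ⟨Fin.castAdd m j, hj, Fin.append_left α β j⟩
  · intro i
    simp only [Fin.append_right]
    refine Subfield.closure_mono ?_ (hβ i)
    rintro _ (⟨j, rfl⟩ | ⟨j, hj, rfl⟩)
    · exact ⟨Fin.castAdd m j, Fin.lt_def.mpr (by simp; omega), Fin.append_left α β j⟩
    · exact ⟨Fin.natAdd n j, Fin.lt_def.mpr (by simpa using hj), Fin.append_right α β j⟩

theorem IsRadicalTower.append_of_isRadicalTower (hα : IsRadicalTower S α k)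
    (hβ : IsRadicalTower S β l) : IsRadicalTower S (Fin.append α β) (Fin.append k l) :=
  hα.append hβ.1 fun i => Subfield.closure_mono Set.subset_union_right (hβ.2 i)

theorem IsRadicalTower.map (hα : IsRadicalTower S α k) (σ : K →+* K) :
    IsRadicalTower S (σ ∘ α) k := by
  refine ⟨hα.1, fun i => ?_⟩
  rw [Function.comp_apply, ← map_pow, Set.image_comp, ← RingHom.map_field_closure]
  exact Subfield.mem_map.mpr ⟨_, hα.2 i, rfl⟩

theorem IsRadicalTower.apply_mem (hα : IsRadicalTower S α k) {G : Subfield K}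
    (hG : ∀ w : K, ∀ m ∈ S, w ^ m ∈ G → w ∈ G) (i : Fin n) : α i ∈ G := by
  induction i using WellFoundedLT.induction with
  | _ i ih =>
    refine hG _ _ (hα.1 i) (Subfield.closure_le.mpr ?_ (hα.2 i))
    rintro _ ⟨j, hj, rfl⟩
    exact ih j hj

theorem closure_range_le_closure_range_append_left (α : Fin n → K) (β : Fin m → K) :
    Subfield.closure (Set.range α) ≤ Subfield.closure (Set.range (Fin.append α β)) :=
  Subfield.closure_mono <| Set.range_subset_iff.mpr fun j => ⟨_, Fin.append_left α β j⟩

theorem closure_range_le_closure_range_append_right (α : Fin n → K) (β : Fin m → K) :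
    Subfield.closure (Set.range β) ≤ Subfield.closure (Set.range (Fin.append α β)) :=
  Subfield.closure_mono <| Set.range_subset_iff.mpr fun j => ⟨_, Fin.append_right α β j⟩

variable (K S) in
def radicalTowerField : Subfield K where
  carrier := {z | ∃ (n : ℕ) (α : Fin n → K) (k : Fin n → ℕ),
    IsRadicalTower S α k ∧ z ∈ Subfield.closure (Set.range α)}
  zero_mem' := ⟨0, Fin.elim0, Fin.elim0, ⟨fun i => i.elim0, fun i => i.elim0⟩, zero_mem _⟩
  one_mem' := ⟨0, Fin.elim0, Fin.elim0, ⟨fun i => i.elim0, fun i => i.elim0⟩, one_mem _⟩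
  add_mem' := by
    rintro a b ⟨n, α, k, hα, ha⟩ ⟨m, β, l, hβ, hb⟩
    exact ⟨n + m, _, _, hα.append_of_isRadicalTower hβ,
      add_mem (closure_range_le_closure_range_append_left α β ha)
        (closure_range_le_closure_range_append_right α β hb)⟩
  mul_mem' := by
    rintro a b ⟨n, α, k, hα, ha⟩ ⟨m, β, l, hβ, hb⟩
    exact ⟨n + m, _, _, hα.append_of_isRadicalTower hβ,
      mul_mem (closure_range_le_closure_range_append_left α β ha)
        (closure_range_le_closure_range_append_right α β hb)⟩
  neg_mem' := fun ⟨n, α, k, hα, ha⟩ => ⟨n, α, k, hα, neg_mem ha⟩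
  inv_mem' := fun _ ⟨n, α, k, hα, ha⟩ => ⟨n, α, k, hα, inv_mem ha⟩

theorem mem_radicalTowerField {z : K} :
    z ∈ radicalTowerField K S ↔ ∃ (n : ℕ) (α : Fin n → K) (k : Fin n → ℕ),
      IsRadicalTower S α k ∧ z ∈ Subfield.closure (Set.range α) :=
  Iff.rfl

theorem mem_radicalTowerField_of_pow_mem {w : K} (hm : m ∈ S)
    (hw : w ^ m ∈ radicalTowerField K S) : w ∈ radicalTowerField K S := by
  obtain ⟨n, α, k, hα, hα_w⟩ := mem_radicalTowerField.mp hw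
  refine ⟨n + 1, Fin.append α fun _ : Fin 1 => w, Fin.append k fun _ => m,
    hα.append (fun _ => hm) fun _ => Subfield.closure_mono Set.subset_union_left hα_w, ?_⟩
  exact Subfield.subset_closure ⟨Fin.natAdd n 0, Fin.append_right _ _ 0⟩

theorem map_mem_radicalTowerField (σ : K →+* K) {z : K} (hz : z ∈ radicalTowerField K S) :
    σ z ∈ radicalTowerField K S := by
  obtain ⟨n, α, k, hα, hα_z⟩ := mem_radicalTowerField.mp hz
  refine ⟨n, σ ∘ α, k, hα.map σ, ?_⟩
  rw [Set.range_comp, ← RingHom.map_field_closure]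
  exact Subfield.mem_map.mpr ⟨z, hα_z, rfl⟩

theorem radicalTowerField_le {G : Subfield K}
    (hG : ∀ w : K, ∀ m ∈ S, w ^ m ∈ G → w ∈ G) : radicalTowerField K S ≤ G := by
  intro z hz
  obtain ⟨n, α, k, hα, hα_z⟩ := mem_radicalTowerField.mp hz
  exact Subfield.closure_le.mpr (Set.range_subset_iff.mpr (hα.apply_mem hG)) hα_z

end RadicalTower

theorem IsConicClosed.mem_of_pow_mem {G : Subfield ℂ} (hG : IsConicClosed G) (w : ℂ) :
    ∀ m ∈ ({2, 3} : Set ℕ), w ^ m ∈ G → w ∈ G := by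
  rintro m (rfl | rfl) hw
  · exact G.mem_of_sq_mem hG.2.2.1 hw
  · exact G.mem_of_cube_mem hG.2.2.1 hG.2.2.2 hw

theorem isConicClosed_radicalTowerField : IsConicClosed (radicalTowerField ℂ {2, 3}) := by
  have hroot (m : ℕ) (hm : m ∈ ({2, 3} : Set ℕ)) (z : ℂ)
      (hz : z ∈ radicalTowerField ℂ {2, 3}) : ∃ w ∈ radicalTowerField ℂ {2, 3}, w ^ m = z := by
    obtain ⟨w, rfl⟩ :=
      IsAlgClosed.exists_pow_nat_eq z (n := m) (by rcases hm with rfl | rfl <;> norm_num)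
    exact ⟨w, mem_radicalTowerField_of_pow_mem hm hz, rfl⟩
  refine ⟨mem_radicalTowerField_of_pow_mem (m := 2) (by simp) ?_,
    fun z => map_mem_radicalTowerField _, hroot 2 (by simp), hroot 3 (by simp)⟩
  rw [Complex.I_sq]
  exact neg_mem (one_mem _)

theorem stmt_5 :
    ∃ F : Subfield ℂ, IsConicClosed F ∧ (∀ G : Subfield ℂ, IsConicClosed G → F ≤ G) ∧
      (F : Set ℂ) =
        { z : ℂ | ∃ (n : ℕ) (α : Fin n → ℂ) (k : Fin n → ℕ),
            (∀ i, k i = 2 ∨ k i = 3) ∧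
            (∀ i : Fin n, α i ^ k i ∈ Subfield.closure (α '' { j | j < i })) ∧
            z ∈ Subfield.closure (Set.range α) } := by
  refine ⟨radicalTowerField ℂ {2, 3}, isConicClosed_radicalTowerField,
    fun G hG => radicalTowerField_le hG.mem_of_pow_mem, ?_⟩
  ext z
  simp only [SetLike.mem_coe, mem_radicalTowerField, IsRadicalTower, Set.mem_ofPred_eq,
    Set.mem_insert_iff, Set.mem_singleton_iff, and_assoc]
end

section
/- Suppose θ ∈ ℝ, q = cos θ, and e > 0 with e ≠ 1. Then (cos(θ/3), cos²(θ/3)) is a common point of the circle x² + y² - (q/4)x - (7/4)y = 0 and the conic (1-e²)x² + y² - (q/4)x - (7/4 - e²)y = 0. -/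
theorem stmt_18 (θ : ℝ) (q e : ℝ) (hq : q = Real.cos θ) (he : 0 < e) (he1 : e ≠ 1) :
    Real.cos (θ / 3) ^ 2 + (Real.cos (θ / 3) ^ 2) ^ 2
        - (q / 4) * Real.cos (θ / 3) - (7 / 4) * Real.cos (θ / 3) ^ 2 = 0 ∧
    (1 - e ^ 2) * Real.cos (θ / 3) ^ 2 + (Real.cos (θ / 3) ^ 2) ^ 2
        - (q / 4) * Real.cos (θ / 3) - (7 / 4 - e ^ 2) * Real.cos (θ / 3) ^ 2 = 0 := by
  have h : Real.cos θ = 4 * Real.cos (θ / 3) ^ 3 - 3 * Real.cos (θ / 3) := by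
    have := Real.cos_three_mul (θ / 3)
    rw [show 3 * (θ / 3) = θ by ring] at this
    linarith
  subst hq
  rw [h]
  constructor <;> ring
end
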